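/- arXiv:1206.3521 — 3 statements merged into one kernel-verified Lean document; each statement's English description precedes it below -/
import Mathlib

section
/- Let X be a spectral space and Y ⊆ X. The closure of Y in the constructible (patch) topology on X equals the set of all ultrafilter limit points x_{Y,𝒰} as 𝒰 ranges over all ultrafilters on Y. -/
/-- A spectral space (Hochster's characterization): a quasi-compact T₀ space with a basis
of quasi-compact open sets closed under finite intersections, in which every nonempty
irreducible closed set has a generic point. -/
def IsSpectralSpace (X : Type*) [TopologicalSpace X] : Prop :=
  CompactSpace X ∧ T0Space X ∧
    TopologicalSpace.IsTopologicalBasis {U : Set X | IsOpen U ∧ IsCompact U} ∧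
    (∀ U V : Set X, IsOpen U → IsCompact U → IsOpen V → IsCompact V → IsCompact (U ∩ V)) ∧
    (∀ C : Set X, IsClosed C → IsIrreducible C → ∃ x : X, C = closure {x})

/-- The constructible (patch) topology on a topological space `X`: the topology generated
by the quasi-compact open sets together with their complements. -/
def constructibleTop (X : Type*) [TopologicalSpace X] : TopologicalSpace X :=
  TopologicalSpace.generateFrom
    ({U : Set X | IsOpen U ∧ IsCompact U} ∪ (compl '' {U : Set X | IsOpen U ∧ IsCompact U}))

/-- The family `K̄_{Y,𝒰}`: complements of quasi-compact open sets `U` with `Y \ U ∈ 𝒰`. -/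
def barFam {X : Type*} [TopologicalSpace X] (Y : Set X) (𝒰 : Ultrafilter Y) :
    Set (Set X) :=
  {S | ∃ U : Set X, IsOpen U ∧ IsCompact U ∧ {y : Y | (y : X) ∉ U} ∈ 𝒰 ∧ S = Uᶜ}

/-- The family `K_{Y,𝒰}`: the sets in `K̄_{Y,𝒰}` together with the quasi-compact open sets
`U` with `U ∩ Y ∈ 𝒰`. -/
def limitFam {X : Type*} [TopologicalSpace X] (Y : Set X) (𝒰 : Ultrafilter Y) :
    Set (Set X) :=
  barFam Y 𝒰 ∪ {U : Set X | IsOpen U ∧ IsCompact U ∧ {y : Y | (y : X) ∈ U} ∈ 𝒰}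

/-!
A point `x` lies in the patch closure of `Y` iff some ultrafilter `𝒰` on `Y` converges to `x` in
the patch topology, i.e. iff for every quasi-compact open `U` one has `U ∩ Y ∈ 𝒰 ↔ x ∈ U`; this is
exactly `x ∈ ⋂₀ limitFam Y 𝒰`. Since the quasi-compact opens form a basis of a T₀ space, they
separate points, so this intersection has at most one point.
-/

open Filter Set TopologicalSpace

section

variable {X : Type*} [TopologicalSpace X]

lemma mem_closure_iff_exists_ultrafilter_tendsto_subtype {s : Set X} {x : X} :
    x ∈ closure s ↔ ∃ 𝒰 : Ultrafilter s, Tendsto ((↑) : s → X) 𝒰 (nhds x) := by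
  simp only [mem_closure_iff_comap_neBot, ← exists_ultrafilter_iff, tendsto_iff_comap]

lemma tendsto_nhds_constructibleTop_iff {α : Type*} (𝒰 : Ultrafilter α) (f : α → X) (x : X) :
    Tendsto f 𝒰 (@nhds X (constructibleTop X) x) ↔
      ∀ U : Set X, IsOpen U → IsCompact U → (f ⁻¹' U ∈ 𝒰 ↔ x ∈ U) := by
  rw [constructibleTop, tendsto_nhds_generateFrom_iff]
  simp only [mem_union, mem_image, mem_ofPred_eq]
  refine ⟨fun h U hUo hUc => ⟨fun hU => ?_, h U (.inl ⟨hUo, hUc⟩)⟩, ?_⟩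
  · by_contra hx
    exact 𝒰.compl_mem_iff_notMem.mp (h Uᶜ (.inr ⟨U, ⟨hUo, hUc⟩, rfl⟩) hx) hU
  · rintro h s (⟨hso, hsc⟩ | ⟨U, ⟨hUo, hUc⟩, rfl⟩) hx
    · exact (h s hso hsc).mpr hx
    · exact 𝒰.compl_mem_iff_notMem.mpr fun hU => hx ((h U hUo hUc).mp hU)

lemma mem_sInter_limitFam_iff (Y : Set X) (𝒰 : Ultrafilter Y) (x : X) :
    x ∈ ⋂₀ limitFam Y 𝒰 ↔
      ∀ U : Set X, IsOpen U → IsCompact U → ((↑) ⁻¹' U ∈ 𝒰 ↔ x ∈ U) := by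
  refine ⟨fun h U hUo hUc => ⟨fun hU => h U (.inr ⟨hUo, hUc, hU⟩), fun hx => ?_⟩, ?_⟩
  · by_contra hU
    exact h Uᶜ (.inl ⟨U, hUo, hUc, 𝒰.compl_mem_iff_notMem.mpr hU, rfl⟩) hx
  · rintro h S (⟨U, hUo, hUc, hU, rfl⟩ | ⟨hSo, hSc, hS⟩)
    · exact fun hx => 𝒰.compl_mem_iff_notMem.mp hU ((h U hUo hUc).mpr hx)
    · exact (h S hSo hSc).mp hS

lemma subsingleton_sInter_limitFam [T0Space X]
    (hB : IsTopologicalBasis {U : Set X | IsOpen U ∧ IsCompact U}) (Y : Set X)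
    (𝒰 : Ultrafilter Y) : (⋂₀ limitFam Y 𝒰).Subsingleton := by
  intro x hx x' hx'
  rw [mem_sInter_limitFam_iff] at hx hx'
  exact hB.eq_iff.mpr fun U ⟨hUo, hUc⟩ => (hx U hUo hUc).symm.trans (hx' U hUo hUc)

end

/-- In a spectral space `X`, the closure of `Y ⊆ X` in the constructible topology is
the set of all ultrafilter limit points of `Y`, as `𝒰` ranges over all ultrafilters
on `Y`. -/
theorem closure_cons_eq_ultrafilter_limits {X : Type*} [TopologicalSpace X]
    (hX : IsSpectralSpace X) (Y : Set X) :
    @closure X (constructibleTop X) Y =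
      {x : X | ∃ 𝒰 : Ultrafilter Y, ⋂₀ limitFam Y 𝒰 = {x}} := by
  obtain ⟨-, hT0, hB, -, -⟩ := hX
  ext x
  rw [@mem_closure_iff_exists_ultrafilter_tendsto_subtype X (constructibleTop X)]
  refine exists_congr fun 𝒰 => ?_
  rw [tendsto_nhds_constructibleTop_iff, ← mem_sInter_limitFam_iff]
  exact ⟨(subsingleton_sInter_limitFam hB Y 𝒰).eq_singleton_of_mem, fun h => h.symm ▸ rfl⟩
end

section
/- Let K be a field and A any subring of K. Then Kr(K|A) := ⋂{ V(T) | V ∈ Zar(K|A) } is a K-function ring, and moreover Kr(K|A) ∩ K equals the integral closure of A in K. -/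
open scoped Polynomial

/-- The Zariski topology on the space of valuation subrings of a field `K`: it is generated
by the basic open sets `B_F = {V | F ⊆ V}`, for `F` a finite subset of `K`. -/
def zarTop (K : Type*) [Field K] : TopologicalSpace (ValuationSubring K) :=
  TopologicalSpace.generateFrom
    {S : Set (ValuationSubring K) |
      ∃ F : Finset K, S = {V : ValuationSubring K | ∀ x ∈ F, x ∈ V}}

/-- The trivial (Gauss) extension `V(T) = V[T]_{M[T]}` of a valuation domain `V` of `K`
to the rational function field `K(T)`, described as a subset of `RatFunc K`: the
fractions `f/g` with `f, g ∈ V[T]` and `g ∉ M[T]` (i.e. some coefficient of `g`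
is a unit of `V`). -/
noncomputable def trivialExtSet {K : Type*} [Field K] (V : ValuationSubring K) :
    Set (RatFunc K) :=
  {h | ∃ f g : K[X], (∀ i, f.coeff i ∈ V) ∧ (∀ i, g.coeff i ∈ V) ∧
    (∃ i, g.coeff i ≠ 0 ∧ (g.coeff i)⁻¹ ∈ V) ∧
    h = algebraMap K[X] (RatFunc K) f / algebraMap K[X] (RatFunc K) g}

/-- A subring `R` of `K(T)` is a `K`-function ring (in the sense of Halter-Koch) if
`T, T⁻¹ ∈ R` and `f(0) ∈ f·R` for every nonzero polynomial `f ∈ K[T]`. -/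
def IsKFunctionRing {K : Type*} [Field K] (R : Subring (RatFunc K)) : Prop :=
  RatFunc.X ∈ R ∧ (RatFunc.X : RatFunc K)⁻¹ ∈ R ∧
    ∀ f : K[X], f ≠ 0 → ∃ r ∈ R,
      algebraMap K (RatFunc K) (f.coeff 0) = algebraMap K[X] (RatFunc K) f * r

/-- The Kronecker function ring `Kr(K|A) = ⋂ {V(T) | V ∈ Zar(K|A)}` as a subset of
`K(T)`, for `A` a subring of the field `K`. -/
noncomputable def krSet {K : Type*} [Field K] (A : Subring K) : Set (RatFunc K) :=
  ⋂ V ∈ {V : ValuationSubring K | (A : Set K) ⊆ ↑V}, trivialExtSet V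

/-!
Each trivial extension `V(T)` is a subring of `K(T)`: a fraction of polynomials over `V` whose
denominator has a unit coefficient, i.e. has nonzero image in `κ(V)[T]`, and such denominators
are closed under products because `κ(V)[T]` is a domain (Gauss's lemma). It contains `T`, `T⁻¹`
and `f(0)/f` for every nonzero `f ∈ K[T]`: divide numerator and denominator by a coefficient of
`f` of maximal value. As `f(0)/f` is the only possible witness of `f(0) ∈ f·R`, being a
`K`-function ring passes to intersections. Finally `V(T) ∩ K = V`, so `Kr(K|A) ∩ K` is the
intersection of the valuation rings containing `A`, which is the integral closure of `A`.
-/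

open Polynomial

theorem Polynomial.map_residue_ne_zero_iff {R : Type*} [CommRing R] [IsLocalRing R] (q : R[X]) :
    q.map (IsLocalRing.residue R) ≠ 0 ↔ ∃ i, IsUnit (q.coeff i) := by
  simp only [ne_eq, Polynomial.ext_iff, coeff_map, coeff_zero, not_forall,
    IsLocalRing.residue_ne_zero_iff_isUnit]

namespace ValuationSubring

variable {K : Type*} [Field K] (V : ValuationSubring K)

theorem isUnit_iff_inv_mem (a : V) : IsUnit a ↔ (a : K) ≠ 0 ∧ (a : K)⁻¹ ∈ V := by
  rw [← not_iff_not, ← _root_.mem_nonunits_iff, ← IsLocalRing.mem_maximalIdeal,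
    ← coe_mem_nonunits_iff, mem_nonunits_iff_or, not_and_or, not_not]

theorem mem_trivialExtSet_iff {h : RatFunc K} :
    h ∈ trivialExtSet V ↔ ∃ p q : V[X], q.map (IsLocalRing.residue V) ≠ 0 ∧
      h = algebraMap K[X] (RatFunc K) (p.map V.subtype) /
        algebraMap K[X] (RatFunc K) (q.map V.subtype) := by
  simp only [map_residue_ne_zero_iff, isUnit_iff_inv_mem]
  constructor
  · rintro ⟨f, g, hf, hg, hu, rfl⟩
    obtain ⟨p, rfl⟩ := (mem_lifts f).1 <|
      (lifts_iff_coeff_lifts (f := V.subtype) f).2 fun i => ⟨⟨_, hf i⟩, rfl⟩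
    obtain ⟨q, rfl⟩ := (mem_lifts g).1 <|
      (lifts_iff_coeff_lifts (f := V.subtype) g).2 fun i => ⟨⟨_, hg i⟩, rfl⟩
    exact ⟨p, q, by simpa only [coeff_map, subtype_apply] using hu, rfl⟩
  · rintro ⟨p, q, hu, rfl⟩
    exact ⟨_, _, fun i => by simp [coeff_map], fun i => by simp [coeff_map],
      by simpa only [coeff_map, subtype_apply] using hu, rfl⟩

theorem algebraMap_map_subtype_ne_zero {q : V[X]} (hq : q.map (IsLocalRing.residue V) ≠ 0) :
    algebraMap K[X] (RatFunc K) (q.map V.subtype) ≠ 0 := by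
  refine RatFunc.algebraMap_ne_zero ((Polynomial.map_ne_zero_iff V.subtype_injective).2 ?_)
  rintro rfl
  exact hq (Polynomial.map_zero _)

noncomputable def trivialExt : Subring (RatFunc K) where
  carrier := trivialExtSet V
  one_mem' := (mem_trivialExtSet_iff V).2 ⟨1, 1, by simp, by simp⟩
  zero_mem' := (mem_trivialExtSet_iff V).2 ⟨0, 1, by simp, by simp⟩
  mul_mem' ha hb := by
    obtain ⟨p₁, q₁, hq₁, rfl⟩ := (mem_trivialExtSet_iff V).1 ha
    obtain ⟨p₂, q₂, hq₂, rfl⟩ := (mem_trivialExtSet_iff V).1 hb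
    refine (mem_trivialExtSet_iff V).2 ⟨p₁ * p₂, q₁ * q₂,
      by simpa only [Polynomial.map_mul] using mul_ne_zero hq₁ hq₂, ?_⟩
    simp only [Polynomial.map_mul, map_mul, div_mul_div_comm]
  add_mem' ha hb := by
    obtain ⟨p₁, q₁, hq₁, rfl⟩ := (mem_trivialExtSet_iff V).1 ha
    obtain ⟨p₂, q₂, hq₂, rfl⟩ := (mem_trivialExtSet_iff V).1 hb
    refine (mem_trivialExtSet_iff V).2 ⟨p₁ * q₂ + p₂ * q₁, q₁ * q₂,
      by simpa only [Polynomial.map_mul] using mul_ne_zero hq₁ hq₂, ?_⟩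
    rw [div_add_div _ _ (algebraMap_map_subtype_ne_zero V hq₁)
      (algebraMap_map_subtype_ne_zero V hq₂)]
    simp only [Polynomial.map_add, Polynomial.map_mul, map_add, map_mul, mul_comm]
  neg_mem' ha := by
    obtain ⟨p, q, hq, rfl⟩ := (mem_trivialExtSet_iff V).1 ha
    exact (mem_trivialExtSet_iff V).2
      ⟨-p, q, hq, by simp only [Polynomial.map_neg, map_neg, neg_div]⟩

theorem X_mem_trivialExt : RatFunc.X ∈ V.trivialExt :=
  (mem_trivialExtSet_iff V).2 ⟨X, 1, by simp, by simp [RatFunc.algebraMap_X]⟩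

theorem inv_X_mem_trivialExt : RatFunc.X⁻¹ ∈ V.trivialExt :=
  (mem_trivialExtSet_iff V).2 ⟨1, X, by simp, by simp [RatFunc.algebraMap_X]⟩

theorem exists_coeff_div_mem {f : K[X]} (hf : f ≠ 0) :
    ∃ i, f.coeff i ≠ 0 ∧ ∀ j, f.coeff j / f.coeff i ∈ V := by
  obtain ⟨i, hi, hmax⟩ :=
    f.support.exists_max_image (fun j => V.valuation (f.coeff j)) (support_nonempty.2 hf)
  have hi0 : f.coeff i ≠ 0 := mem_support_iff.1 hi
  refine ⟨i, hi0, fun j => (valuation_le_one_iff V _).1 ?_⟩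
  rw [map_div₀]
  by_cases hj : j ∈ f.support
  · exact div_le_one_of_le₀ (hmax j hj) zero_le
  · simp [notMem_support_iff.1 hj]

theorem coeff_div_mem_trivialExt {f : K[X]} (hf : f ≠ 0) (j : ℕ) :
    algebraMap K (RatFunc K) (f.coeff j) / algebraMap K[X] (RatFunc K) f ∈ V.trivialExt := by
  obtain ⟨i, hi0, hdiv⟩ := V.exists_coeff_div_mem hf
  refine ⟨C (f.coeff j / f.coeff i), C (f.coeff i)⁻¹ * f, ?_, ?_, ⟨i, ?_⟩, ?_⟩
  · intro k
    rw [coeff_C]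
    split_ifs
    · exact hdiv j
    · exact V.zero_mem
  · intro k
    rw [coeff_C_mul, inv_mul_eq_div]
    exact hdiv k
  · simp [coeff_C_mul, hi0]
  · have hci : RatFunc.C (f.coeff i) ≠ 0 := by simpa using hi0
    rw [map_mul, RatFunc.algebraMap_C, RatFunc.algebraMap_C, map_div₀, map_inv₀,
      RatFunc.algebraMap_eq_C]
    field_simp

theorem algebraMap_mem_trivialExt_iff (x : K) :
    algebraMap K (RatFunc K) x ∈ V.trivialExt ↔ x ∈ V := by
  refine ⟨fun ⟨f, g, hf, _, ⟨i, hgi, hgi_inv⟩, hx⟩ => ?_, fun hx => ?_⟩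
  · have hg : algebraMap K[X] (RatFunc K) g ≠ 0 :=
      RatFunc.algebraMap_ne_zero fun hg => hgi (by simp [hg])
    have hCx : C x * g = f := RatFunc.algebraMap_injective K <| by
      rw [map_mul, RatFunc.algebraMap_C, ← RatFunc.algebraMap_eq_C, hx, div_mul_cancel₀ _ hg]
    have : x = f.coeff i * (g.coeff i)⁻¹ := by
      rw [eq_mul_inv_iff_mul_eq₀ hgi, ← hCx, coeff_C_mul]
    exact this ▸ V.mul_mem _ _ (hf i) hgi_inv
  · exact (mem_trivialExtSet_iff V).2 ⟨C ⟨x, hx⟩, 1, by simp,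
      by simp [RatFunc.algebraMap_C, RatFunc.algebraMap_eq_C]⟩

end ValuationSubring

theorem isKFunctionRing_iff {K : Type*} [Field K] (R : Subring (RatFunc K)) :
    IsKFunctionRing R ↔ RatFunc.X ∈ R ∧ RatFunc.X⁻¹ ∈ R ∧ ∀ f : K[X], f ≠ 0 →
      algebraMap K (RatFunc K) (f.coeff 0) / algebraMap K[X] (RatFunc K) f ∈ R := by
  refine and_congr_right' (and_congr_right' (forall₂_congr fun f hf => ?_))
  have hf' : algebraMap K[X] (RatFunc K) f ≠ 0 := RatFunc.algebraMap_ne_zero hf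
  refine ⟨fun ⟨r, hr, h⟩ => ?_, fun h => ⟨_, h, (mul_div_cancel₀ _ hf').symm⟩⟩
  rwa [h, mul_div_cancel_left₀ _ hf']

theorem IsKFunctionRing.iInf {K ι : Type*} [Field K] {R : ι → Subring (RatFunc K)}
    (hR : ∀ i, IsKFunctionRing (R i)) : IsKFunctionRing (⨅ i, R i) := by
  simp only [isKFunctionRing_iff, Subring.mem_iInf] at hR ⊢
  exact ⟨fun i => (hR i).1, fun i => (hR i).2.1, fun f hf i => (hR i).2.2 f hf⟩

theorem ValuationSubring.isKFunctionRing_trivialExt {K : Type*} [Field K]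
    (V : ValuationSubring K) : IsKFunctionRing V.trivialExt :=
  (isKFunctionRing_iff _).2
    ⟨V.X_mem_trivialExt, V.inv_X_mem_trivialExt, fun _ hf => V.coeff_div_mem_trivialExt hf 0⟩

noncomputable def krSubring {K : Type*} [Field K] (A : Subring K) : Subring (RatFunc K) :=
  ⨅ V : {V : ValuationSubring K // (A : Set K) ⊆ V}, V.1.trivialExt

theorem coe_krSubring {K : Type*} [Field K] (A : Subring K) :
    (krSubring A : Set (RatFunc K)) = krSet A := by
  simp only [krSubring, Subring.coe_iInf, Set.iInter_subtype, krSet, Set.mem_ofPred_eq]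
  rfl

theorem algebraMap_mem_krSubring_iff {K : Type*} [Field K] (A : Subring K) (x : K) :
    algebraMap K (RatFunc K) x ∈ krSubring A ↔ IsIntegral A x := by
  have hKr := iInf_valuationSubring_superset (s := (A : Set K))
  rw [Subring.closure_eq] at hKr
  rw [← mem_integralClosure_iff, ← Subalgebra.mem_toSubring, ← hKr]
  simp only [krSubring, Subring.mem_iInf, ValuationSubring.algebraMap_mem_trivialExt_iff,
    ValuationSubring.mem_toSubring]
  rfl

/-- For any subring `A` of a field `K`, `Kr(K|A) := ⋂ {V(T) | V ∈ Zar(K|A)}` is a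
`K`-function ring, and `Kr(K|A) ∩ K` is the integral closure of `A` in `K`. -/
theorem kr_isKFunctionRing {K : Type*} [Field K] (A : Subring K) :
    ∃ R : Subring (RatFunc K), (R : Set (RatFunc K)) = krSet A ∧ IsKFunctionRing R ∧
      {x : K | algebraMap K (RatFunc K) x ∈ R} = {x : K | A.subtype.IsIntegralElem x} :=
  ⟨krSubring A, coe_krSubring A,
    IsKFunctionRing.iInf fun V => V.1.isKFunctionRing_trivialExt,
    Set.ext (algebraMap_mem_krSubring_iff A)⟩
end

section
/- Let K be a field, A a subring of K, and Y', Y'' subsets of Zar(K|A) whose closures in the constructible topology of Zar(K|A) coincide. Then ⋂{V | V ∈ Y'} = ⋂{V | V ∈ Y''}. In particular, for any Y ⊆ Zar(K|A), ⋂{V | V ∈ Y} = ⋂{W | W ∈ Cl^cons(Y)}. -/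
/-!
For `x ∈ K` the set `{V ∈ Zar(K|A) | x ∈ V} = Zar(K|A[x])` is a basic Zariski open, and it
is quasi-compact: for any `s ⊆ K`, `{V | s ⊆ V}` is a continuous image of a closed subset of
the Cantor cube `K → Bool`, the indicator functions of valuation rings that are `true` on `s`.
So it is closed in the constructible topology. Now `x ∈ ⋂ Y` iff `Y` lies in this closed set,
iff `Cl^cons(Y)` does; hence `⋂ Y = ⋂ Cl^cons(Y)`, which only depends on `Cl^cons(Y)`.
-/

open Set Topology

attribute [local instance] zarTop

theorem isClosed_constructibleTop_of_isOpen_of_isCompact {X : Type*} [TopologicalSpace X]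
    {U : Set X} (hU : IsOpen U) (hUc : IsCompact U) : IsClosed[constructibleTop X] U :=
  @IsClosed.mk X (constructibleTop X) U
    (TopologicalSpace.isOpen_generateFrom_of_mem (Or.inr ⟨U, ⟨hU, hUc⟩, rfl⟩))

theorem biInter_closure_eq_biInter {X α : Type*} [TopologicalSpace X] {f : X → Set α}
    (hf : ∀ a, IsClosed {x | a ∈ f x}) (Y : Set X) :
    ⋂ x ∈ closure Y, f x = ⋂ x ∈ Y, f x := by
  refine (biInter_subset_biInter_left subset_closure).antisymm fun a ha => ?_
  have hY : Y ⊆ {x | a ∈ f x} := fun x hx => mem_iInter₂.mp ha x hx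
  exact mem_iInter₂.mpr fun x hx => closure_minimal hY (hf a) hx

namespace ValuationSubring

variable (K : Type*) [Field K]

def indicators : Set (K → Bool) :=
  {f | f 1 = true ∧ (∀ a b, f a = true → f b = true → f (a + b) = true) ∧
    (∀ a b, f a = true → f b = true → f (a * b) = true) ∧ (∀ a, f a = true → f (-a) = true) ∧
    ∀ a, f a = true ∨ f a⁻¹ = true}

theorem isClosed_indicators : IsClosed (indicators K) := by
  have h (a : K) : IsClopen {f : K → Bool | f a = true} :=
    (isClopen_discrete {true}).preimage (continuous_apply a)
  have closure_rule (a b c : K) :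
      IsClosed {f : K → Bool | f a = true → f b = true → f c = true} :=
    isClosed_imp (h a).isOpen (isClosed_imp (h b).isOpen (h c).isClosed)
  simp only [indicators, ofPred_and, ofPred_forall]
  refine (h 1).isClosed.inter (.inter ?_ (.inter ?_ (.inter ?_ ?_)))
  · exact isClosed_iInter fun a => isClosed_iInter fun b => closure_rule a b (a + b)
  · exact isClosed_iInter fun a => isClosed_iInter fun b => closure_rule a b (a * b)
  · exact isClosed_iInter fun a => isClosed_imp (h a).isOpen (h (-a)).isClosed
  · exact isClosed_iInter fun a => (h a).isClosed.union (h a⁻¹).isClosed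

variable {K}

def ofIndicator (f : indicators K) : ValuationSubring K where
  carrier := {x | f.1 x = true}
  one_mem' := f.2.1
  add_mem' := f.2.2.1 _ _
  mul_mem' := f.2.2.2.1 _ _
  zero_mem' := by simpa using f.2.2.1 1 (-1) f.2.1 (f.2.2.2.2.1 1 f.2.1)
  neg_mem' := f.2.2.2.2.1 _
  mem_or_inv_mem' := f.2.2.2.2.2

@[simp]
theorem mem_ofIndicator {f : indicators K} {x : K} : x ∈ ofIndicator f ↔ f.1 x = true :=
  Iff.rfl

theorem ofIndicator_surjective : Function.Surjective (ofIndicator (K := K)) := by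
  classical
  intro V
  refine ⟨⟨fun x => decide (x ∈ V), ?_⟩, by ext; simp⟩
  simp only [indicators, decide_eq_true_eq, mem_ofPred_eq]
  exact ⟨V.one_mem, V.add_mem, V.mul_mem, V.neg_mem, V.mem_or_inv_mem⟩

theorem isOpen_setOf_mem (x : K) : IsOpen {V : ValuationSubring K | x ∈ V} :=
  TopologicalSpace.isOpen_generateFrom_of_mem ⟨{x}, by simp⟩

theorem isClopen_setOf_val_apply (a : K) : IsClopen {f : indicators K | f.1 a = true} :=
  (isClopen_discrete {true}).preimage (f := fun f : indicators K => f.1 a)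
    ((continuous_apply a).comp continuous_subtype_val)

theorem continuous_ofIndicator : Continuous (ofIndicator (K := K)) := by
  unfold zarTop
  refine continuous_generateFrom_iff.mpr ?_
  rintro _ ⟨F, rfl⟩
  rw [show ofIndicator ⁻¹' {V | ∀ x ∈ F, x ∈ V} = ⋂ x ∈ F, {f | f.1 x = true} by ext; simp]
  exact isOpen_biInter_finset fun x _ => (isClopen_setOf_val_apply x).isOpen

theorem isCompact_setOf_subset (s : Set K) : IsCompact {V : ValuationSubring K | s ⊆ V} := by
  have : CompactSpace (indicators K) :=
    isCompact_iff_compactSpace.mp (isClosed_indicators K).isCompact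
  rw [← ofIndicator_surjective.image_preimage {V : ValuationSubring K | s ⊆ V}]
  refine (IsClosed.isCompact ?_).image continuous_ofIndicator
  rw [show ofIndicator ⁻¹' {V : ValuationSubring K | s ⊆ V} = ⋂ a ∈ s, {f | f.1 a = true} by
    ext; simp [subset_def]]
  exact isClosed_biInter fun a _ => (isClopen_setOf_val_apply a).isClosed

theorem isClosed_constructibleTop_setOf_mem (A : Subring K) (x : K) :
    IsClosed[constructibleTop {V : ValuationSubring K // (A : Set K) ⊆ V}] {V | x ∈ V.1} := by
  refine isClosed_constructibleTop_of_isOpen_of_isCompact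
    ((isOpen_setOf_mem x).preimage continuous_subtype_val) ?_
  rw [IsEmbedding.subtypeVal.isCompact_iff]
  convert isCompact_setOf_subset (insert x (A : Set K)) using 1
  ext V
  simp [insert_subset_iff, and_comm]

end ValuationSubring

/-- If two subsets `Y'`, `Y''` of `Zar(K|A)` have the same closure in the constructible
topology, then they represent the same ring: `⋂{V | V ∈ Y'} = ⋂{V | V ∈ Y''}`.
In particular, any `Y ⊆ Zar(K|A)` and its constructible closure have the same
intersection. -/
theorem same_cons_closure_same_intersection {K : Type*} [Field K] (A : Subring K) :
    letI : TopologicalSpace (ValuationSubring K) := zarTop K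
    ∀ Y' Y'' : Set {V : ValuationSubring K // (A : Set K) ⊆ ↑V},
      (@closure _ (constructibleTop {V : ValuationSubring K // (A : Set K) ⊆ ↑V}) Y' =
          @closure _ (constructibleTop {V : ValuationSubring K // (A : Set K) ⊆ ↑V}) Y'' →
        ⋂ V ∈ Y', ((V : ValuationSubring K) : Set K) =
          ⋂ V ∈ Y'', ((V : ValuationSubring K) : Set K)) ∧
      ⋂ V ∈ Y', ((V : ValuationSubring K) : Set K) =
        ⋂ W ∈ @closure _ (constructibleTop {V : ValuationSubring K // (A : Set K) ⊆ ↑V}) Y',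
          ((W : ValuationSubring K) : Set K) := by
  intro Y' Y''
  have key (Y : Set {V : ValuationSubring K // (A : Set K) ⊆ ↑V}) :=
    (@biInter_closure_eq_biInter _ _
      (constructibleTop {V : ValuationSubring K // (A : Set K) ⊆ ↑V}) (fun V => (V.1 : Set K))
      (ValuationSubring.isClosed_constructibleTop_setOf_mem A) Y).symm
  exact ⟨fun h => by rw [key Y', h, ← key Y''], key Y'⟩
end
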